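/- Let G be a group and let ν: G → ℝ be a nonnegative function satisfying ν(gh) ≤ ν(g) + ν(h) for all g, h ∈ G. Suppose (ψ_i)_{i∈ℕ} is a sequence of group homomorphisms ψ_i: (ℝ,+) → G whose images pairwise commute, and suppose there are constants M₂ ≥ 0 with ν(ψ_i(t)) ≤ M₂·|t| for all i and all t ∈ ℝ. Suppose further that φ: G → ℝ is a homogeneous quasi-morphism, A > 0 is a constant with |φ(g)| ≤ A·ν(g) for all g ∈ G, and there is M₁ > 0 with φ(ψ_i(1)) ≥ M₁ for every i (in particular the numbers φ(ψ_i(1)) all have the same sign). Then for every k ∈ ℕ and all v₁, …, v_k ≥ 0: (M₁/A)·(v₁ + … + v_k) ≤ ν(ψ₁(v₁)·ψ₂(v₂)·…·ψ_k(v_k)) ≤ M₂·(v₁ + … + v_k). -/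

import Mathlib

/-!
Since `φ` is homogeneous, its defect on a commuting pair `a, b` is the defect on `aⁿ, bⁿ`
divided by `n`, so `φ` is additive on commuting elements. Hence each `t ↦ φ (ψ i t)` is an
additive map `ℝ → ℝ`, bounded by `A M₂ |t|`, hence continuous and therefore linear, and `φ`
of the product of the `ψ i (v i)` is `∑ vᵢ φ (ψ i 1) ≥ M₁ ∑ vᵢ`; the bound `|φ| ≤ A ν` turns this
into the lower bound. The upper bound is subadditivity of `ν`.
-/

lemma eq_zero_of_forall_natCast_mul_abs_le {x K : ℝ} (h : ∀ n : ℕ, n * |x| ≤ K) : x = 0 := by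
  by_contra hx
  have hpos : 0 < |x| := abs_pos.mpr hx
  obtain ⟨n, hn⟩ := exists_nat_gt (K / |x|)
  have := (div_lt_iff₀ hpos).mp hn
  linarith [h n]

lemma AddMonoidHom.eq_mul_map_one_of_bound (f : ℝ →+ ℝ) (C : ℝ) (hf : ∀ t, |f t| ≤ C * |t|)
    (t : ℝ) : f t = t * f 1 := by
  have hcont : Continuous f := AddMonoidHomClass.continuous_of_bound f C hf
  simpa using map_real_smul f hcont t 1

section Group

variable {G : Type*} [Group G]

lemma map_mul_of_commute_of_homogeneous (φ : G → ℝ)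
    (hqm : ∃ K : ℝ, ∀ a b : G, |φ (a * b) - φ a - φ b| ≤ K)
    (hhom : ∀ (a : G) (n : ℕ), φ (a ^ n) = n * φ a) {a b : G} (hab : Commute a b) :
    φ (a * b) = φ a + φ b := by
  obtain ⟨K, hK⟩ := hqm
  have hdefect : ∀ n : ℕ, n * |φ (a * b) - φ a - φ b| ≤ K := fun n => by
    have h := hK (a ^ n) (b ^ n)
    rw [← hab.mul_pow, hhom, hhom, hhom, ← mul_sub, ← mul_sub, abs_mul, Nat.abs_cast] at h
    exact h
  linarith [eq_zero_of_forall_natCast_mul_abs_le hdefect]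

lemma map_list_prod_of_pairwise_commute (φ : G → ℝ)
    (hadd : ∀ a b : G, Commute a b → φ (a * b) = φ a + φ b) (h1 : φ 1 = 0) :
    ∀ {l : List G}, l.Pairwise Commute → φ l.prod = (l.map φ).sum
  | [], _ => h1
  | a :: l, hl => by
    rw [List.pairwise_cons] at hl
    rw [List.prod_cons, hadd _ _ (Commute.list_prod_right l a hl.1),
      map_list_prod_of_pairwise_commute φ hadd h1 hl.2, List.map_cons, List.sum_cons]

lemma map_list_prod_le_sum_of_subadditive (ν : G → ℝ)
    (hsub : ∀ g h : G, ν (g * h) ≤ ν g + ν h) (h1 : ν 1 ≤ 0) :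
    ∀ l : List G, ν l.prod ≤ (l.map ν).sum
  | [] => h1
  | a :: l => by
    rw [List.prod_cons, List.map_cons, List.sum_cons]
    linarith [hsub a l.prod, map_list_prod_le_sum_of_subadditive ν hsub h1 l]

lemma map_apply_eq_mul_of_bound (φ : G → ℝ)
    (hadd : ∀ a b : G, Commute a b → φ (a * b) = φ a + φ b)
    (ψ : ℝ → G) (hψ : ∀ s t : ℝ, ψ (s + t) = ψ s * ψ t)
    (C : ℝ) (hbound : ∀ t, |φ (ψ t)| ≤ C * |t|) (t : ℝ) : φ (ψ t) = t * φ (ψ 1) := by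
  have hcomm (s t : ℝ) : Commute (ψ s) (ψ t) := by
    rw [Commute, SemiconjBy, ← hψ, ← hψ, add_comm]
  exact (AddMonoidHom.mk' (fun t => φ (ψ t)) fun s t => by rw [hψ, hadd _ _ (hcomm s t)]
    ).eq_mul_map_one_of_bound C hbound t

end Group

theorem biLipschitz_embedding_of_Rinfty_pos_general
    {G : Type*} [Group G] (ν : G → ℝ)
    (hsub : ∀ g h : G, ν (g * h) ≤ ν g + ν h)
    (ψ : ℕ → ℝ → G)
    (hψ : ∀ (i : ℕ) (s t : ℝ), ψ i (s + t) = ψ i s * ψ i t)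
    (hcomm : ∀ (i j : ℕ) (s t : ℝ), ψ i s * ψ j t = ψ j t * ψ i s)
    (M₂ : ℝ)
    (hψν : ∀ (i : ℕ) (t : ℝ), ν (ψ i t) ≤ M₂ * |t|)
    (φ : G → ℝ)
    (hqm : ∃ K : ℝ, ∀ a b : G, |φ (a * b) - φ a - φ b| ≤ K)
    (hhom : ∀ (a : G) (m : ℤ), φ (a ^ m) = (m : ℝ) * φ a)
    (A : ℝ) (hA : 0 < A)
    (hφν : ∀ g : G, |φ g| ≤ A * ν g)
    (M₁ : ℝ)
    (hφψ : ∀ i : ℕ, M₁ ≤ φ (ψ i 1)) :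
    ∀ (k : ℕ) (v : Fin k → ℝ), (∀ i, 0 ≤ v i) →
      M₁ / A * (∑ i, v i) ≤ ν (List.ofFn fun i : Fin k => ψ i (v i)).prod ∧
        ν (List.ofFn fun i : Fin k => ψ i (v i)).prod ≤ M₂ * ∑ i, v i := by
  intro k v hv
  have hadd : ∀ a b : G, Commute a b → φ (a * b) = φ a + φ b := fun a b =>
    map_mul_of_commute_of_homogeneous φ hqm fun a n => by exact_mod_cast hhom a n
  have hν1 : ν 1 ≤ 0 := by simpa [show ψ 0 0 = 1 by simpa using hψ 0 0 0] using hψν 0 0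
  have hlin (i : ℕ) (t : ℝ) : φ (ψ i t) = t * φ (ψ i 1) :=
    map_apply_eq_mul_of_bound φ hadd (ψ i) (hψ i) (A * M₂) (fun t => by
      simpa [mul_assoc] using (hφν _).trans (mul_le_mul_of_nonneg_left (hψν i t) hA.le)) t
  have hpair : (List.ofFn fun i : Fin k => ψ i (v i)).Pairwise Commute :=
    List.pairwise_ofFn.mpr fun i j _ => hcomm _ _ _ _
  constructor
  · have hφP : M₁ * ∑ i, v i ≤ φ (List.ofFn fun i : Fin k => ψ i (v i)).prod := by
      rw [map_list_prod_of_pairwise_commute φ hadd (by simpa using hhom 1 0) hpair,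
        List.map_ofFn, List.sum_ofFn, Finset.mul_sum]
      refine Finset.sum_le_sum fun i _ => ?_
      rw [Function.comp_apply, hlin, mul_comm (v i)]
      exact mul_le_mul_of_nonneg_right (hφψ i) (hv i)
    rw [div_mul_eq_mul_div, div_le_iff₀ hA, mul_comm _ A]
    exact hφP.trans ((le_abs_self _).trans (hφν _))
  · calc ν (List.ofFn fun i : Fin k => ψ i (v i)).prod
        ≤ ∑ i : Fin k, ν (ψ i (v i)) := by
          simpa [List.map_ofFn, List.sum_ofFn] using
            map_list_prod_le_sum_of_subadditive ν hsub hν1 (List.ofFn fun i : Fin k => ψ i (v i))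
      _ ≤ ∑ i : Fin k, M₂ * v i := Finset.sum_le_sum fun i _ => by
          simpa [abs_of_nonneg (hv i)] using hψν i (v i)
      _ = M₂ * ∑ i, v i := (Finset.mul_sum _ _ _).symm

/-- Bi-Lipschitz embedding of the semigroup `ℝ^∞₊`: let `ν : G → ℝ` be a nonnegative
subadditive function, `(ψᵢ)_{i∈ℕ}` a sequence of homomorphisms `(ℝ,+) → G` with pairwise
commuting images and `ν(ψᵢ(t)) ≤ M₂·|t|`, and `φ : G → ℝ` a homogeneous quasi-morphism
with `|φ(g)| ≤ A·ν(g)` and `φ(ψᵢ(1)) ≥ M₁ > 0` for all `i`.  Then for every `k` and all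
`v₁, …, v_k ≥ 0`,
`(M₁/A)·(v₁+⋯+v_k) ≤ ν(ψ₁(v₁)⋯ψ_k(v_k)) ≤ M₂·(v₁+⋯+v_k)`. -/
theorem biLipschitz_embedding_of_Rinfty_pos
    {G : Type*} [Group G] (ν : G → ℝ)
    (hν0 : ∀ g : G, 0 ≤ ν g)
    (hsub : ∀ g h : G, ν (g * h) ≤ ν g + ν h)
    (ψ : ℕ → ℝ → G)
    (hψ : ∀ (i : ℕ) (s t : ℝ), ψ i (s + t) = ψ i s * ψ i t)
    (hcomm : ∀ (i j : ℕ) (s t : ℝ), ψ i s * ψ j t = ψ j t * ψ i s)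
    (M₂ : ℝ) (hM₂ : 0 ≤ M₂)
    (hψν : ∀ (i : ℕ) (t : ℝ), ν (ψ i t) ≤ M₂ * |t|)
    (φ : G → ℝ)
    (hqm : ∃ K : ℝ, ∀ a b : G, |φ (a * b) - φ a - φ b| ≤ K)
    (hhom : ∀ (a : G) (m : ℤ), φ (a ^ m) = (m : ℝ) * φ a)
    (A : ℝ) (hA : 0 < A)
    (hφν : ∀ g : G, |φ g| ≤ A * ν g)
    (M₁ : ℝ) (hM₁ : 0 < M₁)
    (hφψ : ∀ i : ℕ, M₁ ≤ φ (ψ i 1)) :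
    ∀ (k : ℕ) (v : Fin k → ℝ), (∀ i, 0 ≤ v i) →
      M₁ / A * (∑ i, v i) ≤ ν (List.ofFn fun i : Fin k => ψ i (v i)).prod ∧
        ν (List.ofFn fun i : Fin k => ψ i (v i)).prod ≤ M₂ * ∑ i, v i :=
  biLipschitz_embedding_of_Rinfty_pos_general ν hsub ψ hψ hcomm M₂ hψν φ hqm hhom A hA hφν M₁ hφψ
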